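/- Let R be a commutative ring, A ∈ R^{n×n}, s < t < n, and i, j > t with δ_s a non-zero-divisor. Then δ_s · a^{t+1}_{i,j} = δ_t · a^{s+1}_{i,j} − Σ_{l=s+1}^{t} a^{s+1}_{i,l} · δ_{t(l,j)}. -/
import Mathlib


open Matrix

/-- determinant of the `k × k` submatrix of `A` obtained by bordering the
upper-left `(k-1) × (k-1)` block with row `i` and column `j`. -/
def borderedMinor {R : Type*} [CommRing R] {n : ℕ} (A : Matrix (Fin n) (Fin n) R)
    (k : ℕ) (i j : Fin n) : R :=
  (Matrix.of fun p q : Fin k =>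
    A (if (p : ℕ) < k - 1 then ⟨p % n, Nat.mod_lt _ i.pos⟩ else i)
      (if (q : ℕ) < k - 1 then ⟨q % n, Nat.mod_lt _ j.pos⟩ else j)).det

/-- `δ_k`: upper-left `k × k` corner minor. -/
def cornerMinor {R : Type*} [CommRing R] {n : ℕ} (A : Matrix (Fin n) (Fin n) R)
    (k : ℕ) (hk : k ≤ n) : R :=
  (A.submatrix (Fin.castLE hk) (Fin.castLE hk)).det

/-- `δ_{t(l,j)}`: determinant of the upper-left `t × t` block of `A` with its
column `l` replaced by (the first `t` entries of) column `j` of `A`. -/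
def replacedColMinor {R : Type*} [CommRing R] {n : ℕ} (A : Matrix (Fin n) (Fin n) R)
    (t : ℕ) (ht : t ≤ n) (l : Fin t) (j : Fin n) : R :=
  (Matrix.of fun p q : Fin t =>
    if q = l then A (Fin.castLE ht p) j else A (Fin.castLE ht p) (Fin.castLE ht q)).det

set_option maxHeartbeats 1000000
set_option synthInstance.maxHeartbeats 1000000


lemma bordered_eq_fromBlocks {R : Type*} [CommRing R] {k : ℕ}
    (M : Matrix (Fin (k+1)) (Fin (k+1)) R) :
    M = (Matrix.reindex finSumFinEquiv finSumFinEquiv)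
      (Matrix.fromBlocks (M.submatrix Fin.castSucc Fin.castSucc)
        (Matrix.of fun p (_ : Fin 1) => M p.castSucc (Fin.last k))
        (Matrix.of fun (_ : Fin 1) q => M (Fin.last k) q.castSucc)
        (Matrix.of fun _ _ => M (Fin.last k) (Fin.last k))) := by
  have h1 : ∀ p : Fin 1, (Fin.natAdd k p : Fin (k+1)) = Fin.last k := by
    intro p; ext; simp [Fin.fin_one_eq_zero p]
  have h2 : ∀ p : Fin k, (Fin.castAdd 1 p : Fin (k+1)) = p.castSucc := fun p => rfl
  funext p q
  obtain ⟨p', rfl⟩ := finSumFinEquiv.surjective p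
  obtain ⟨q', rfl⟩ := finSumFinEquiv.surjective q
  rw [Matrix.reindex_apply, Matrix.submatrix_apply, Equiv.symm_apply_apply,
    Equiv.symm_apply_apply]
  rcases p' with p'|p' <;> rcases q' with q'|q' <;>
    simp [Matrix.fromBlocks, h1, h2]

lemma det_bordered_of_isUnit {K : Type*} [Field K] {k : ℕ}
    (M : Matrix (Fin (k+1)) (Fin (k+1)) K)
    (h : IsUnit (M.submatrix Fin.castSucc Fin.castSucc).det) :
    M.det = M (Fin.last k) (Fin.last k) * (M.submatrix Fin.castSucc Fin.castSucc).det
      - ∑ c : Fin k, M (Fin.last k) c.castSucc *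
          cramer (M.submatrix Fin.castSucc Fin.castSucc) (fun p => M p.castSucc (Fin.last k)) c := by
  have hinv : Invertible (M.submatrix Fin.castSucc Fin.castSucc) :=
    (M.submatrix Fin.castSucc Fin.castSucc).invertibleOfIsUnitDet h
  have hIO : (⅟(M.submatrix Fin.castSucc Fin.castSucc) : Matrix (Fin k) (Fin k) K)
      = (M.submatrix Fin.castSucc Fin.castSucc)⁻¹ := invOf_eq_nonsing_inv _
  conv_lhs => rw [bordered_eq_fromBlocks M]
  rw [Matrix.det_reindex_self, Matrix.det_fromBlocks₁₁, Matrix.det_fin_one]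
  have hcr : ∀ c, cramer (M.submatrix Fin.castSucc Fin.castSucc)
        (fun p => M p.castSucc (Fin.last k)) c
      = (M.submatrix Fin.castSucc Fin.castSucc).det *
        ((M.submatrix Fin.castSucc Fin.castSucc)⁻¹ *ᵥ fun p => M p.castSucc (Fin.last k)) c := by
    intro c
    rw [← Matrix.det_smul_inv_mulVec_eq_cramer _ _ h]
    simp [Matrix.smul_mulVec]
  simp only [hcr]
  rw [Matrix.sub_apply, Matrix.of_apply, mul_sub]
  have key : ((of (fun (_ : Fin 1) (q : Fin k) => M (Fin.last k) q.castSucc) *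
      ⅟(M.submatrix Fin.castSucc Fin.castSucc) *
      of fun (p : Fin k) (_ : Fin 1) => M p.castSucc (Fin.last k)) : Matrix (Fin 1) (Fin 1) K) 0 0
      = ∑ c : Fin k, M (Fin.last k) c.castSucc *
          ((M.submatrix Fin.castSucc Fin.castSucc)⁻¹ *ᵥ fun p => M p.castSucc (Fin.last k)) c := by
    rw [Matrix.mul_assoc, Matrix.mul_apply]
    refine Finset.sum_congr rfl fun c _ => ?_
    rw [Matrix.mul_apply, Matrix.mulVec, hIO]
    simp [dotProduct]
  rw [key, Finset.mul_sum]
  refine congrArg₂ _ (by ring) (Finset.sum_congr rfl fun c _ => by ring)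


lemma cramer_map' {R S : Type*} [CommRing R] [CommRing S] (f : R →+* S)
    {m : Type*} [DecidableEq m] [Fintype m] (T : Matrix m m R) (b : m → R) (c : m) :
    cramer (T.map f) (fun p => f (b p)) c = f (cramer T b c) := by
  rw [cramer_apply, cramer_apply, RingHom.map_det, RingHom.mapMatrix_apply,
    Matrix.map_updateCol]
  rfl

lemma border_rhs_map {R S : Type*} [CommRing R] [CommRing S] (f : R →+* S) {k : ℕ}
    (M : Matrix (Fin (k+1)) (Fin (k+1)) R) :
    (M.map f) (Fin.last k) (Fin.last k) * ((M.map f).submatrix Fin.castSucc Fin.castSucc).det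
      - ∑ c : Fin k, (M.map f) (Fin.last k) c.castSucc *
          cramer ((M.map f).submatrix Fin.castSucc Fin.castSucc)
            (fun p => (M.map f) p.castSucc (Fin.last k)) c
    = f (M (Fin.last k) (Fin.last k) * (M.submatrix Fin.castSucc Fin.castSucc).det
      - ∑ c : Fin k, M (Fin.last k) c.castSucc *
          cramer (M.submatrix Fin.castSucc Fin.castSucc)
            (fun p => M p.castSucc (Fin.last k)) c) := by
  have hsub : (M.map f).submatrix Fin.castSucc Fin.castSucc
      = (M.submatrix Fin.castSucc Fin.castSucc).map f := rfl
  rw [map_sub, _root_.map_mul, map_sum, RingHom.map_det, RingHom.mapMatrix_apply, hsub]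
  congr 1
  refine Finset.sum_congr rfl fun c _ => ?_
  rw [_root_.map_mul, ← cramer_map' f]
  rfl

theorem det_bordered {R : Type*} [CommRing R] {k : ℕ}
    (M : Matrix (Fin (k+1)) (Fin (k+1)) R) :
    M.det = M (Fin.last k) (Fin.last k) * (M.submatrix Fin.castSucc Fin.castSucc).det
      - ∑ c : Fin k, M (Fin.last k) c.castSucc *
          cramer (M.submatrix Fin.castSucc Fin.castSucc)
            (fun p => M p.castSucc (Fin.last k)) c := by
  classical
  let φ : MvPolynomial (Fin (k+1) × Fin (k+1)) ℤ →+* R :=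
    (MvPolynomial.aeval fun pq : Fin (k+1) × Fin (k+1) => M pq.1 pq.2).toRingHom
  let G : Matrix (Fin (k+1)) (Fin (k+1)) (MvPolynomial (Fin (k+1) × Fin (k+1)) ℤ) :=
    Matrix.of fun p q => MvPolynomial.X (p, q)
  have hM : M = G.map φ := by
    funext p q
    simp [G, φ]
  have hGdetne : (G.submatrix Fin.castSucc Fin.castSucc).det ≠ 0 := by
    intro h0
    have h2 := congrArg
      (MvPolynomial.aeval (R := ℤ) fun pq : Fin (k+1) × Fin (k+1) =>
        if pq.1 = pq.2 then (1:ℤ) else 0).toRingHom h0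
    rw [RingHom.map_det, RingHom.mapMatrix_apply] at h2
    have h1 : ((G.submatrix Fin.castSucc Fin.castSucc).map
        (MvPolynomial.aeval (R := ℤ) fun pq : Fin (k+1) × Fin (k+1) =>
          if pq.1 = pq.2 then (1:ℤ) else 0).toRingHom)
        = (1 : Matrix (Fin k) (Fin k) ℤ) := by
      funext p q
      simp [G, Matrix.one_apply, Fin.castSucc_inj]
    rw [h1] at h2
    simp at h2
  have hGen : G.det
      = G (Fin.last k) (Fin.last k) * (G.submatrix Fin.castSucc Fin.castSucc).det
      - ∑ c : Fin k, G (Fin.last k) c.castSucc *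
          cramer (G.submatrix Fin.castSucc Fin.castSucc)
            (fun p => G p.castSucc (Fin.last k)) c := by
    apply IsFractionRing.injective (MvPolynomial (Fin (k+1) × Fin (k+1)) ℤ)
      (FractionRing (MvPolynomial (Fin (k+1) × Fin (k+1)) ℤ))
    set ψ : MvPolynomial (Fin (k+1) × Fin (k+1)) ℤ →+*
        FractionRing (MvPolynomial (Fin (k+1) × Fin (k+1)) ℤ) := algebraMap _ _ with hψ
    rw [RingHom.map_det, RingHom.mapMatrix_apply, ← border_rhs_map ψ G]
    apply det_bordered_of_isUnit
    have hsub : ((G.map ψ).submatrix Fin.castSucc Fin.castSucc).det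
        = ψ ((G.submatrix Fin.castSucc Fin.castSucc).det) := by
      rw [RingHom.map_det, RingHom.mapMatrix_apply]; rfl
    rw [hsub, isUnit_iff_ne_zero]
    intro h
    apply hGdetne
    apply IsFractionRing.injective (MvPolynomial (Fin (k+1) × Fin (k+1)) ℤ)
      (FractionRing (MvPolynomial (Fin (k+1) × Fin (k+1)) ℤ))
    rw [map_zero]
    exact h
  calc (M).det = (G.map φ).det := by rw [← hM]
    _ = φ G.det := by rw [RingHom.map_det, RingHom.mapMatrix_apply]
    _ = _ := by
      rw [hGen, ← border_rhs_map φ G, ← hM]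

lemma borderedMinor_eq {R : Type*} [CommRing R] {n : ℕ} (A : Matrix (Fin n) (Fin n) R)
    {k : ℕ} (hk : k ≤ n) (i j : Fin n) :
    borderedMinor A (k+1) i j
      = A i j * (A.submatrix (Fin.castLE hk) (Fin.castLE hk)).det
        - ∑ c : Fin k, A i (Fin.castLE hk c) *
            cramer (A.submatrix (Fin.castLE hk) (Fin.castLE hk))
              (fun p => A (Fin.castLE hk p) j) c := by
  unfold borderedMinor
  rw [det_bordered]
  have hmod : ∀ p : Fin k, (⟨(p : ℕ) % n, Nat.mod_lt _ i.pos⟩ : Fin n) = Fin.castLE hk p := by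
    intro p; ext; exact Nat.mod_eq_of_lt (lt_of_lt_of_le p.isLt hk)
  have hmod' : ∀ p : Fin k, (⟨(p : ℕ) % n, Nat.mod_lt _ j.pos⟩ : Fin n) = Fin.castLE hk p := by
    intro p; ext; exact Nat.mod_eq_of_lt (lt_of_lt_of_le p.isLt hk)
  have h1 : ∀ p : Fin k, ((p.castSucc : Fin (k+1)) : ℕ) < k + 1 - 1 := by
    intro p; simpa using p.isLt
  have h2 : ¬ (((Fin.last k : Fin (k+1)) : ℕ) < k + 1 - 1) := by simp
  have hsub : ((Matrix.of fun p q : Fin (k+1) =>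
        A (if (p : ℕ) < k + 1 - 1 then ⟨p % n, Nat.mod_lt _ i.pos⟩ else i)
          (if (q : ℕ) < k + 1 - 1 then ⟨q % n, Nat.mod_lt _ j.pos⟩ else j)).submatrix
        Fin.castSucc Fin.castSucc) = A.submatrix (Fin.castLE hk) (Fin.castLE hk) := by
    funext p q
    rw [Matrix.submatrix_apply, Matrix.submatrix_apply, of_apply,
      if_pos (h1 p), if_pos (h1 q)]
    simp only [Fin.coe_castSucc]
    rw [hmod, hmod']
  have hv : (fun p : Fin k => (Matrix.of fun p q : Fin (k+1) =>
        A (if (p : ℕ) < k + 1 - 1 then ⟨p % n, Nat.mod_lt _ i.pos⟩ else i)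
          (if (q : ℕ) < k + 1 - 1 then ⟨q % n, Nat.mod_lt _ j.pos⟩ else j))
        p.castSucc (Fin.last k)) = fun p => A (Fin.castLE hk p) j := by
    funext p
    rw [of_apply, if_pos (h1 p), if_neg h2]
    simp only [Fin.coe_castSucc]
    rw [hmod]
  have hll : (Matrix.of fun p q : Fin (k+1) =>
        A (if (p : ℕ) < k + 1 - 1 then ⟨p % n, Nat.mod_lt _ i.pos⟩ else i)
          (if (q : ℕ) < k + 1 - 1 then ⟨q % n, Nat.mod_lt _ j.pos⟩ else j))
        (Fin.last k) (Fin.last k) = A i j := by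
    rw [of_apply, if_neg h2, if_neg h2]
  have hrow : ∀ c : Fin k, (Matrix.of fun p q : Fin (k+1) =>
        A (if (p : ℕ) < k + 1 - 1 then ⟨p % n, Nat.mod_lt _ i.pos⟩ else i)
          (if (q : ℕ) < k + 1 - 1 then ⟨q % n, Nat.mod_lt _ j.pos⟩ else j))
        (Fin.last k) c.castSucc = A i (Fin.castLE hk c) := by
    intro c
    rw [of_apply, if_neg h2, if_pos (h1 c)]
    simp only [Fin.coe_castSucc]
    rw [hmod']
  rw [hsub, hv, hll]
  congr 1
  refine Finset.sum_congr rfl fun c _ => ?_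
  rw [hrow]

lemma replacedColMinor_eq {R : Type*} [CommRing R] {n : ℕ} (A : Matrix (Fin n) (Fin n) R)
    {t : ℕ} (ht : t ≤ n) (l : Fin t) (j : Fin n) :
    replacedColMinor A t ht l j
      = cramer (A.submatrix (Fin.castLE ht) (Fin.castLE ht)) (fun p => A (Fin.castLE ht p) j) l := by
  rw [cramer_apply]
  unfold replacedColMinor
  congr 1
  funext p q
  rw [Matrix.updateCol_apply, of_apply]
  by_cases h : q = l <;> simp [h]

lemma key_cramer {R : Type*} [CommRing R] {n s t : ℕ} (A : Matrix (Fin n) (Fin n) R)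
    (hst : s < t) (htn : t ≤ n) (j : Fin n) (q : Fin s) :
    (A.submatrix (Fin.castLE htn) (Fin.castLE htn)).det *
      cramer (A.submatrix (Fin.castLE (hst.le.trans htn)) (Fin.castLE (hst.le.trans htn)))
        (fun p => A (Fin.castLE (hst.le.trans htn) p) j) q
    = (A.submatrix (Fin.castLE (hst.le.trans htn)) (Fin.castLE (hst.le.trans htn))).det *
        cramer (A.submatrix (Fin.castLE htn) (Fin.castLE htn))
          (fun p => A (Fin.castLE htn p) j) (Fin.castLE hst.le q)
      + ∑ l : Fin (t - s),
          cramer (A.submatrix (Fin.castLE (hst.le.trans htn)) (Fin.castLE (hst.le.trans htn)))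
            (fun p => A (Fin.castLE (hst.le.trans htn) p) ⟨s + l, by have := l.isLt; omega⟩) q
          * cramer (A.submatrix (Fin.castLE htn) (Fin.castLE htn))
              (fun p => A (Fin.castLE htn p) j) ⟨s + l, by have := l.isLt; omega⟩ := by
  have hsn : s ≤ n := hst.le.trans htn
  set T := A.submatrix (Fin.castLE htn) (Fin.castLE htn) with hT
  set S := A.submatrix (Fin.castLE hsn) (Fin.castLE hsn) with hS
  set w := cramer T (fun p => A (Fin.castLE htn p) j) with hw
  -- main computation over the full sum
  have main : ∑ l : Fin t,
      cramer S (fun p => A (Fin.castLE hsn p) (Fin.castLE htn l)) q * w l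
      = T.det * cramer S (fun p => A (Fin.castLE hsn p) j) q := by
    have h1 : ∀ l : Fin t,
        cramer S (fun p => A (Fin.castLE hsn p) (Fin.castLE htn l)) q * w l
        = cramer S (fun p => A (Fin.castLE hsn p) (Fin.castLE htn l) * w l) q := by
      intro l
      have : (fun p => A (Fin.castLE hsn p) (Fin.castLE htn l) * w l)
          = w l • (fun p => A (Fin.castLE hsn p) (Fin.castLE htn l)) := by
        funext p; simp [mul_comm]
      rw [this, LinearMap.map_smul]
      simp [mul_comm]
    simp only [h1]
    rw [sum_cramer_apply]
    have h2 : (fun p : Fin s => ∑ l : Fin t, A (Fin.castLE hsn p) (Fin.castLE htn l) * w l)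
        = T.det • (fun p : Fin s => A (Fin.castLE hsn p) j) := by
      funext p
      have h3 : ∑ l : Fin t, A (Fin.castLE hsn p) (Fin.castLE htn l) * w l
          = (T *ᵥ w) (Fin.castLE hst.le p) := by
        rw [Matrix.mulVec, dotProduct]
        exact Finset.sum_congr rfl fun l _ => rfl
      rw [h3, hw, Matrix.mulVec_cramer]
      rfl
    rw [h2, LinearMap.map_smul]
    rfl
  -- split the sum
  have hts : s + (t - s) = t := by omega
  have split : ∀ f : Fin t → R, ∑ l : Fin t, f l
      = ∑ l : Fin s, f (Fin.castLE hst.le l)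
        + ∑ l : Fin (t - s), f ⟨s + l, by have := l.isLt; omega⟩ := by
    intro f
    rw [← Fintype.sum_equiv (finCongr hts) (fun l => f (finCongr hts l)) f (fun x => rfl),
      Fin.sum_univ_add]
    refine congrArg₂ (· + ·) ?_ ?_ <;>
      exact Finset.sum_congr rfl fun l _ => congrArg f (by ext; simp)
  -- first part
  have hpart1 : ∑ l : Fin s,
      cramer S (fun p => A (Fin.castLE hsn p) (Fin.castLE htn (Fin.castLE hst.le l))) q
        * w (Fin.castLE hst.le l)
      = S.det * w (Fin.castLE hst.le q) := by
    have hc : ∀ l : Fin s,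
        cramer S (fun p => A (Fin.castLE hsn p) (Fin.castLE htn (Fin.castLE hst.le l))) q
        = (Pi.single l S.det : Fin s → R) q := by
      intro l
      have := cramer_row_self S (fun p : Fin s =>
        A (Fin.castLE hsn p) (Fin.castLE htn (Fin.castLE hst.le l))) l (fun p => rfl)
      exact congrFun this q
    simp only [hc, Pi.single_apply, ite_mul, zero_mul]
    rw [Finset.sum_ite_eq]
    simp
  rw [split] at main
  rw [hpart1] at main
  rw [← main]
  refine congrArg₂ (· + ·) rfl (Finset.sum_congr rfl fun l _ => rfl)

lemma fin_sum_split {R : Type*} [AddCommMonoid R] {s t : ℕ} (hst : s ≤ t) (f : Fin t → R) :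
    ∑ l : Fin t, f l = ∑ l : Fin s, f (Fin.castLE hst l)
      + ∑ l : Fin (t - s), f ⟨s + l, by have := l.isLt; omega⟩ := by
  have hts : s + (t - s) = t := by omega
  rw [← Fintype.sum_equiv (finCongr hts) (fun l => f (finCongr hts l)) f (fun x => rfl),
    Fin.sum_univ_add]
  refine congrArg₂ (· + ·) ?_ ?_ <;>
    exact Finset.sum_congr rfl fun l _ => congrArg f (by ext; simp)


/-- `δ_s a^{t+1}_{i,j} = δ_t a^{s+1}_{i,j} − Σ_{l=s+1}^{t} a^{s+1}_{i,l} δ_{t(l,j)}`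
for `i, j > t` (0-based: `t ≤ i, j`), with `δ_s` a non-zero-divisor. -/
theorem bordered_minor_step {R : Type*} [CommRing R] {n s t : ℕ}
    (A : Matrix (Fin n) (Fin n) R) (hst : s < t) (htn : t < n)
    (i j : Fin n) (hi : t ≤ (i : ℕ)) (hj : t ≤ (j : ℕ))
    (hδs : cornerMinor A s (by omega) ∈ nonZeroDivisors R) :
    cornerMinor A s (by omega) * borderedMinor A (t + 1) i j
      = cornerMinor A t (by omega) * borderedMinor A (s + 1) i j
        - ∑ l : Fin (t - s),
            borderedMinor A (s + 1) i ⟨s + l, by have := l.isLt; omega⟩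
              * replacedColMinor A t (by omega) ⟨s + l, by have := l.isLt; omega⟩ j := by
  clear hδs hi hj
  have htn' : t ≤ n := htn.le
  have hsn : s ≤ n := hst.le.trans htn'
  have main : (A.submatrix (Fin.castLE hsn) (Fin.castLE hsn)).det * borderedMinor A (t + 1) i j
      = (A.submatrix (Fin.castLE htn') (Fin.castLE htn')).det * borderedMinor A (s + 1) i j
        - ∑ l : Fin (t - s),
            borderedMinor A (s + 1) i ⟨s + l, by have := l.isLt; omega⟩
              * replacedColMinor A t htn' ⟨s + l, by have := l.isLt; omega⟩ j := by
    set T := A.submatrix (Fin.castLE htn') (Fin.castLE htn') with hT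
    set S := A.submatrix (Fin.castLE hsn) (Fin.castLE hsn) with hS
    set w : Fin t → R := cramer T (fun p => A (Fin.castLE htn' p) j) with hw
    have hsummand : ∀ l : Fin (t - s),
        borderedMinor A (s + 1) i ⟨s + l, by have := l.isLt; omega⟩
          * replacedColMinor A t htn' ⟨s + l, by have := l.isLt; omega⟩ j
        = (A i ⟨s + l, by have := l.isLt; omega⟩ * S.det
            - ∑ c : Fin s, A i (Fin.castLE hsn c) *
                cramer S (fun p => A (Fin.castLE hsn p)
                  (⟨s + l, by have := l.isLt; omega⟩ : Fin n)) c)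
          * w ⟨s + l, by have := l.isLt; omega⟩ := by
      intro l
      rw [borderedMinor_eq A hsn i _, replacedColMinor_eq A htn' _ j]
    rw [borderedMinor_eq A htn' i j, borderedMinor_eq A hsn i j]
    rw [Finset.sum_congr rfl (fun l _ => hsummand l)]
    rw [fin_sum_split hst.le (fun c => A i (Fin.castLE htn' c) * w c)]
    have hcomp : ∀ c : Fin s, Fin.castLE htn' (Fin.castLE hst.le c) = Fin.castLE hsn c :=
      fun _ => rfl
    have hmk : ∀ l : Fin (t - s),
        Fin.castLE htn' (⟨s + l, by have := l.isLt; omega⟩ : Fin t)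
          = (⟨s + l, by have := l.isLt; omega⟩ : Fin n) := fun _ => rfl
    simp only [hcomp, hmk]
    -- abbreviations for the big sums
    have hkey : ∀ c : Fin s,
        T.det * cramer S (fun p => A (Fin.castLE hsn p) j) c
        = S.det * w (Fin.castLE hst.le c)
          + ∑ l : Fin (t - s),
              cramer S (fun p => A (Fin.castLE hsn p)
                (⟨s + l, by have := l.isLt; omega⟩ : Fin n)) c
              * w ⟨s + l, by have := l.isLt; omega⟩ := fun c => key_cramer A hst htn' j c
    have h1 : T.det * ∑ c : Fin s, A i (Fin.castLE hsn c) *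
          cramer S (fun p => A (Fin.castLE hsn p) j) c
        = S.det * ∑ c : Fin s, A i (Fin.castLE hsn c) * w (Fin.castLE hst.le c)
          + ∑ c : Fin s, A i (Fin.castLE hsn c) *
              ∑ l : Fin (t - s),
                cramer S (fun p => A (Fin.castLE hsn p)
                  (⟨s + l, by have := l.isLt; omega⟩ : Fin n)) c
                * w ⟨s + l, by have := l.isLt; omega⟩ := by
      rw [Finset.mul_sum, Finset.mul_sum, ← Finset.sum_add_distrib]
      refine Finset.sum_congr rfl fun c _ => ?_
      rw [show A i (Fin.castLE hsn c) * cramer S (fun p => A (Fin.castLE hsn p) j) c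
          = A i (Fin.castLE hsn c) * cramer S (fun p => A (Fin.castLE hsn p) j) c from rfl]
      calc T.det * (A i (Fin.castLE hsn c) * cramer S (fun p => A (Fin.castLE hsn p) j) c)
          = A i (Fin.castLE hsn c) *
            (T.det * cramer S (fun p => A (Fin.castLE hsn p) j) c) := by ring
        _ = _ := by rw [hkey c]; ring
    have h2 : ∑ l : Fin (t - s),
        (A i (⟨s + l, by have := l.isLt; omega⟩ : Fin n) * S.det
          - ∑ c : Fin s, A i (Fin.castLE hsn c) *
              cramer S (fun p => A (Fin.castLE hsn p)
                (⟨s + l, by have := l.isLt; omega⟩ : Fin n)) c)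
          * w ⟨s + l, by have := l.isLt; omega⟩
        = S.det * ∑ l : Fin (t - s),
            A i (⟨s + l, by have := l.isLt; omega⟩ : Fin n)
              * w ⟨s + l, by have := l.isLt; omega⟩
          - ∑ c : Fin s, A i (Fin.castLE hsn c) *
              ∑ l : Fin (t - s),
                cramer S (fun p => A (Fin.castLE hsn p)
                  (⟨s + l, by have := l.isLt; omega⟩ : Fin n)) c
                * w ⟨s + l, by have := l.isLt; omega⟩ := by
      rw [Finset.mul_sum]
      rw [show (∑ c : Fin s, A i (Fin.castLE hsn c) *
            ∑ l : Fin (t - s),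
              cramer S (fun p => A (Fin.castLE hsn p)
                (⟨s + l, by have := l.isLt; omega⟩ : Fin n)) c
              * w ⟨s + l, by have := l.isLt; omega⟩)
          = ∑ l : Fin (t - s), ∑ c : Fin s, A i (Fin.castLE hsn c) *
              (cramer S (fun p => A (Fin.castLE hsn p)
                  (⟨s + l, by have := l.isLt; omega⟩ : Fin n)) c
                * w ⟨s + l, by have := l.isLt; omega⟩) from by
        rw [Finset.sum_comm]
        exact Finset.sum_congr rfl fun c _ => by rw [Finset.mul_sum]]
      rw [← Finset.sum_sub_distrib]
      refine Finset.sum_congr rfl fun l _ => ?_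
      rw [sub_mul, Finset.sum_mul]
      congr 1
      · ring
      · exact Finset.sum_congr rfl fun c _ => by ring
    rw [h2]
    linear_combination h1
  exact main
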